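/- arXiv:1901.08237 — 4 statements merged into one kernel-verified Lean document; each statement's English description precedes it below -/
import Mathlib

section
/- Let k' ≥ k be positive integers with k' = c² k for some c ≥ 1. For any vectors β*, z ∈ ℝ^d with ‖β*‖₀ ≤ k and β* ≠ H_{k'}(z), where H_{k'}(z) denotes the hard thresholding operator keeping the k' largest-magnitude coordinates of z and zeroing the rest, we have ⟨β* − H_{k'}(z), z − H_{k'}(z)⟩ ≤ (1/2)·√(k/k')·‖β* − H_{k'}(z)‖₂². -/
open Finset

/-!
Let `S ⊇ supp β*`, `T = S \ A` and `U = A \ S`. Since `z − w` vanishes on `A` and `β* − w`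
vanishes off `S ∪ A`, the inner product is `∑_{j ∈ T} β*_j z_j`, while `‖β* − w‖²` is at least
`‖β*_T‖² + ‖z_U‖²`. Every coordinate of `z` on `U ⊆ A` dominates every coordinate on
`T ⊆ Aᶜ`, and `k' |T| ≤ k |U|`, so `k' ‖z_T‖² ≤ k ‖z_U‖²`. Cauchy–Schwarz and AM–GM then give
`⟨β* − w, z − w⟩ ≤ ‖β*_T‖ ‖z_T‖ ≤ √(k/k') ‖β*_T‖ ‖z_U‖ ≤ ½ √(k/k') (‖β*_T‖² + ‖z_U‖²)`.
-/

namespace Finset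

variable {ι : Type*}

theorem card_mul_card_sdiff_le [DecidableEq ι] (S A : Finset ι) (hSA : #S ≤ #A) :
    #A * #(S \ A) ≤ #S * #(A \ S) := by
  have hA := card_sdiff_add_card_inter A S
  have hS := card_sdiff_add_card_inter S A
  rw [inter_comm] at hS
  -- with `m = #(S ∩ A)` this is `#A (#S - m) ≤ #S (#A - m)`, i.e. `#S m ≤ #A m`
  nlinarith

theorem mul_sum_le_mul_sum_of_forall_le {T U : Finset ι} {f : ι → ℝ} {a b : ℝ} (ha : 0 ≤ a)
    (hf : ∀ j ∈ T, ∀ i ∈ U, f j ≤ f i) (hf₀ : ∀ i ∈ U, 0 ≤ f i)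
    (hcard : a * #T ≤ b * #U) :
    a * ∑ j ∈ T, f j ≤ b * ∑ i ∈ U, f i := by
  have hU₀ : 0 ≤ ∑ i ∈ U, f i := sum_nonneg hf₀
  have havg : (#U : ℝ) * ∑ j ∈ T, f j ≤ #T * ∑ i ∈ U, f i := by
    calc (#U : ℝ) * ∑ j ∈ T, f j = ∑ j ∈ T, ∑ _i ∈ U, f j := by
          simp only [sum_const, nsmul_eq_mul, mul_sum]
      _ ≤ ∑ j ∈ T, ∑ i ∈ U, f i := sum_le_sum fun j hj => sum_le_sum fun i hi => hf j hj i hi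
      _ = #T * ∑ i ∈ U, f i := by
          rw [sum_comm]; simp only [sum_const, nsmul_eq_mul, mul_sum]
  rcases U.eq_empty_or_nonempty with rfl | hU
  · have : a * #T = 0 := le_antisymm (by simpa using hcard) (by positivity)
    rcases mul_eq_zero.mp this with h | h
    · simp [h]
    · simp [card_eq_zero.mp (by exact_mod_cast h)]
  · have hUpos : (0 : ℝ) < #U := by exact_mod_cast hU.card_pos
    refine le_of_mul_le_mul_left ?_ hUpos
    calc (#U : ℝ) * (a * ∑ j ∈ T, f j) = a * (#U * ∑ j ∈ T, f j) := by ring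
      _ ≤ a * (#T * ∑ i ∈ U, f i) := mul_le_mul_of_nonneg_left havg ha
      _ = (a * #T) * ∑ i ∈ U, f i := by ring
      _ ≤ (b * #U) * ∑ i ∈ U, f i := mul_le_mul_of_nonneg_right hcard hU₀
      _ = #U * (b * ∑ i ∈ U, f i) := by ring

end Finset

section Thresholding

variable {ι : Type*} [Fintype ι] [DecidableEq ι] {β z w : ι → ℝ} {S A : Finset ι}

theorem sum_sub_mul_sub_eq_sum_sdiff (hβ : ∀ i ∉ S, β i = 0) (hwA : ∀ i ∈ A, w i = z i)
    (hwA' : ∀ i ∉ A, w i = 0) :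
    ∑ i, (β i - w i) * (z i - w i) = ∑ j ∈ S \ A, β j * z j := by
  symm
  refine sum_subset_zero_on_sdiff (subset_univ _) (fun i hi => ?_) (fun j hj => ?_)
  · by_cases hiA : i ∈ A
    · simp [hwA i hiA]
    · have hiS : i ∉ S := fun hiS => (mem_sdiff.mp hi).2 (mem_sdiff.mpr ⟨hiS, hiA⟩)
      simp [hβ i hiS, hwA' i hiA]
  · simp [hwA' j (mem_sdiff.mp hj).2]

theorem sum_sq_sdiff_add_sum_sq_sdiff_le (hβ : ∀ i ∉ S, β i = 0) (hwA : ∀ i ∈ A, w i = z i)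
    (hwA' : ∀ i ∉ A, w i = 0) :
    ∑ j ∈ S \ A, β j ^ 2 + ∑ i ∈ A \ S, z i ^ 2 ≤ ∑ i, (β i - w i) ^ 2 := by
  have hdisj : Disjoint (S \ A) (A \ S) := disjoint_sdiff_sdiff
  calc ∑ j ∈ S \ A, β j ^ 2 + ∑ i ∈ A \ S, z i ^ 2
        = ∑ i ∈ S \ A ∪ A \ S, (β i - w i) ^ 2 := by
          rw [sum_union hdisj]
          congr 1
          · refine sum_congr rfl fun j hj => ?_
            simp [hwA' j (mem_sdiff.mp hj).2]
          · refine sum_congr rfl fun i hi => ?_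
            obtain ⟨hiA, hiS⟩ := mem_sdiff.mp hi
            simp [hβ i hiS, hwA i hiA]
    _ ≤ ∑ i, (β i - w i) ^ 2 :=
          sum_le_sum_of_subset_of_nonneg (subset_univ _) fun i _ _ => sq_nonneg _

end Thresholding

theorem le_half_mul_add_of_sq_le_mul {x B Y Z r : ℝ} (hr : 0 ≤ r) (hB : 0 ≤ B) (hZ : 0 ≤ Z)
    (hx : x ^ 2 ≤ B * Y) (hY : Y ≤ r ^ 2 * Z) :
    x ≤ r / 2 * (B + Z) := by
  refine (abs_le_of_sq_le_sq' ?_ (by positivity)).2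
  nlinarith [mul_le_mul_of_nonneg_left hY hB, sq_nonneg (B - Z), sq_nonneg r]

theorem hard_thresholding_inner_bound_general (d k k' : ℕ) (hk : 0 < k) (hkk' : k ≤ k')
    (βs z w : Fin d → ℝ)
    (hβs : (Finset.univ.filter fun i => βs i ≠ 0).card ≤ k)
    (A : Finset (Fin d)) (hA : A.card = k')
    (hwA : ∀ i ∈ A, w i = z i) (hwA' : ∀ i ∉ A, w i = 0)
    (htop : ∀ i ∈ A, ∀ j ∉ A, |z j| ≤ |z i|) :
    ∑ i, (βs i - w i) * (z i - w i) ≤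
      (1 / 2) * Real.sqrt ((k : ℝ) / k') * ∑ i, (βs i - w i) ^ 2 := by
  set S := Finset.univ.filter fun i => βs i ≠ 0
  have hβ : ∀ i ∉ S, βs i = 0 := fun i hi => by simpa [S] using hi
  have hk' : (0 : ℝ) < k' := by exact_mod_cast hk.trans_le hkk'
  have hcard : (k' : ℝ) * #(S \ A) ≤ k * #(A \ S) := by
    have := card_mul_card_sdiff_le S A (by omega)
    rw [hA] at this
    exact_mod_cast this.trans (Nat.mul_le_mul_right _ hβs)
  have hZ : ∑ j ∈ S \ A, z j ^ 2 ≤ Real.sqrt (k / k') ^ 2 * ∑ i ∈ A \ S, z i ^ 2 := by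
    rw [Real.sq_sqrt (by positivity), div_mul_eq_mul_div, le_div_iff₀ hk', mul_comm]
    refine mul_sum_le_mul_sum_of_forall_le hk'.le (fun j hj i hi => ?_)
      (fun _ _ => sq_nonneg _) hcard
    exact sq_le_sq.mpr (htop i (mem_sdiff.mp hi).1 j (mem_sdiff.mp hj).2)
  rw [sum_sub_mul_sub_eq_sum_sdiff hβ hwA hwA']
  calc ∑ j ∈ S \ A, βs j * z j
      ≤ Real.sqrt (k / k') / 2 * (∑ j ∈ S \ A, βs j ^ 2 + ∑ i ∈ A \ S, z i ^ 2) :=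
        le_half_mul_add_of_sq_le_mul (Real.sqrt_nonneg _) (sum_nonneg fun _ _ => sq_nonneg _)
          (sum_nonneg fun _ _ => sq_nonneg _) (sum_mul_sq_le_sq_mul_sq _ _ _) hZ
    _ ≤ (1 / 2) * Real.sqrt (k / k') * ∑ i, (βs i - w i) ^ 2 := by
        rw [div_eq_mul_inv, mul_comm (Real.sqrt _), one_div]
        exact mul_le_mul_of_nonneg_left (sum_sq_sdiff_add_sum_sq_sdiff_le hβ hwA hwA')
          (by positivity)

/-- Hard thresholding lemma: if `w = H_{k'}(z)` keeps the `k'` largest-magnitude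
coordinates of `z` (zeroing the rest), `‖β*‖₀ ≤ k`, `k' = c²k` with `c ≥ 1`, and
`β* ≠ w`, then `⟨β* − w, z − w⟩ ≤ (1/2)·√(k/k')·‖β* − w‖₂²`. -/
theorem hard_thresholding_inner_bound (d k k' : ℕ) (hk : 0 < k) (hkk' : k ≤ k')
    (c : ℝ) (hc : 1 ≤ c) (hck : (k' : ℝ) = c ^ 2 * k)
    (βs z w : Fin d → ℝ)
    (hβs : (Finset.univ.filter fun i => βs i ≠ 0).card ≤ k)
    (A : Finset (Fin d)) (hA : A.card = k')
    (hwA : ∀ i ∈ A, w i = z i) (hwA' : ∀ i ∉ A, w i = 0)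
    (htop : ∀ i ∈ A, ∀ j ∉ A, |z j| ≤ |z i|)
    (hne : βs ≠ w) :
    ∑ i, (βs i - w i) * (z i - w i) ≤
      (1 / 2) * Real.sqrt ((k : ℝ) / k') * ∑ i, (βs i - w i) ^ 2 :=
  hard_thresholding_inner_bound_general d k k' hk hkk' βs z w hβs A hA hwA hwA' htop
end

section
/- Let x be a random vector in ℝ^d with mean zero, covariance Σ, and bounded 4th moment: E[⟨v,x⟩⁴] ≤ C₄·(E[⟨v,x⟩²])² for all unit vectors v. Let ξ be an independent mean-zero random variable with variance σ², let Δ ∈ ℝ^d, and set g = x(x^⊤Δ − ξ), G = ΣΔ. Then the operator norm of the covariance of g satisfies ‖E[(g − G)(g − G)^⊤]‖_op ≤ 2(C₄ + 1)·‖Σ‖_op²·‖Δ‖₂² + σ²·‖Σ‖_op. -/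
/-! Fix `w` and put `A = ⟨w, x⟩`, `P = ⟨Δ, x⟩`. The quadratic form of the covariance of `g` at `w`
is the variance of `A (P - ξ)`, which is at most `E[A²P²] + σ² E[A²]` because `ξ` is centred and
independent of `x`. Cauchy–Schwarz and the fourth-moment condition (homogeneous, hence valid for
all vectors) give `E[A²P²] ≤ √E[A⁴] √E[P⁴] ≤ C₄ E[A²] E[P²] ≤ C₄ ‖Σ‖² |w|² |Δ|²`, and since the
covariance is symmetric, a bound on its quadratic form bounds its operator norm. -/

open MeasureTheory ProbabilityTheory
open scoped ENNReal Matrix Matrix.Norms.L2Operator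

lemma EuclideanSpace.norm_toLp_sq {ι : Type*} [Fintype ι] (w : ι → ℝ) :
    ‖WithLp.toLp 2 w‖ ^ 2 = ∑ i, w i ^ 2 := by
  simp [EuclideanSpace.real_norm_sq_eq]

namespace Matrix

variable {n : Type*} [Fintype n] [DecidableEq n]

open scoped RealInnerProductSpace in
lemma dotProduct_mulVec_eq_inner_toEuclideanCLM (M : Matrix n n ℝ) (w : n → ℝ) :
    w ⬝ᵥ M *ᵥ w = ⟪toEuclideanCLM (𝕜 := ℝ) M (WithLp.toLp 2 w), WithLp.toLp 2 w⟫ := by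
  rw [real_inner_comm, inner_toEuclideanCLM]

lemma dotProduct_mulVec_le_l2_opNorm_mul (M : Matrix n n ℝ) (w : n → ℝ) :
    w ⬝ᵥ M *ᵥ w ≤ ‖M‖ * ∑ i, w i ^ 2 := by
  rw [dotProduct_mulVec_eq_inner_toEuclideanCLM, ← EuclideanSpace.norm_toLp_sq,
    ← l2_opNorm_toEuclideanCLM]
  set T := toEuclideanCLM (𝕜 := ℝ) M
  calc _ ≤ ‖T (WithLp.toLp 2 w)‖ * ‖WithLp.toLp 2 w‖ := real_inner_le_norm _ _
    _ ≤ ‖T‖ * ‖WithLp.toLp 2 w‖ * ‖WithLp.toLp 2 w‖ := by gcongr; exact T.le_opNorm _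
    _ = _ := by ring

lemma l2_opNorm_le_of_isHermitian {M : Matrix n n ℝ} (hM : M.IsHermitian) {K : ℝ} (hK : 0 ≤ K)
    (h : ∀ w, |w ⬝ᵥ M *ᵥ w| ≤ K * ∑ i, w i ^ 2) : ‖M‖ ≤ K := by
  rw [← l2_opNorm_toEuclideanCLM, ContinuousLinearMap.norm_eq_iSup_rayleighQuotient _
    (isSymmetric_toEuclideanLin_iff.mpr hM)]
  refine ciSup_le fun v => ?_
  have := h (WithLp.ofLp v)
  rw [dotProduct_mulVec_eq_inner_toEuclideanCLM, ← EuclideanSpace.norm_toLp_sq,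
    WithLp.toLp_ofLp] at this
  rw [ContinuousLinearMap.rayleighQuotient, abs_div, abs_sq]
  exact div_le_of_le_mul₀ (sq_nonneg _) hK this

end Matrix

section SecondMoment

variable {Ω ι : Type*} [MeasurableSpace Ω] {μ : Measure Ω}

noncomputable def secondMomentMatrix (μ : Measure Ω) (h : Ω → ι → ℝ) : Matrix ι ι ℝ :=
  Matrix.of fun i j => ∫ ω, h ω i * h ω j ∂μ

lemma secondMomentMatrix_isHermitian (μ : Measure Ω) (h : Ω → ι → ℝ) :
    (secondMomentMatrix μ h).IsHermitian := by
  ext i j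
  simp only [Matrix.conjTranspose_apply, star_trivial, secondMomentMatrix, Matrix.of_apply,
    mul_comm]

variable [Fintype ι]

lemma memLp_dotProduct {p : ℝ≥0∞} {h : Ω → ι → ℝ} (hh : ∀ i, MemLp (fun ω => h ω i) p μ)
    (v : ι → ℝ) : MemLp (fun ω => v ⬝ᵥ h ω) p μ :=
  memLp_finsetSum _ fun i _ => (hh i).const_mul (v i)

lemma integral_dotProduct_mul_dotProduct {h : Ω → ι → ℝ} (hh : ∀ i, MemLp (fun ω => h ω i) 2 μ)
    (u v : ι → ℝ) :
    ∫ ω, (u ⬝ᵥ h ω) * (v ⬝ᵥ h ω) ∂μ = u ⬝ᵥ secondMomentMatrix μ h *ᵥ v := by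
  have hint : ∀ i j, Integrable (fun ω => u i * v j * (h ω i * h ω j)) μ := fun i j =>
    ((hh i).integrable_mul (hh j)).const_mul _
  calc ∫ ω, (u ⬝ᵥ h ω) * (v ⬝ᵥ h ω) ∂μ
      = ∫ ω, ∑ i, ∑ j, u i * v j * (h ω i * h ω j) ∂μ := by
        congr 1 with ω
        simp only [dotProduct, Finset.sum_mul_sum]
        exact Finset.sum_congr rfl fun i _ => Finset.sum_congr rfl fun j _ => by ring
    _ = ∑ i, ∑ j, u i * v j * ∫ ω, h ω i * h ω j ∂μ := by
        rw [integral_finsetSum _ fun i _ => integrable_finsetSum _ fun j _ => hint i j]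
        refine Finset.sum_congr rfl fun i _ => ?_
        rw [integral_finsetSum _ fun j _ => hint i j]
        simp only [integral_const_mul]
    _ = u ⬝ᵥ secondMomentMatrix μ h *ᵥ v := by
        simp only [dotProduct, Matrix.mulVec, secondMomentMatrix, Matrix.of_apply, Finset.mul_sum]
        exact Finset.sum_congr rfl fun i _ => Finset.sum_congr rfl fun j _ => by ring

lemma integral_dotProduct_sq {h : Ω → ι → ℝ} (hh : ∀ i, MemLp (fun ω => h ω i) 2 μ)
    (v : ι → ℝ) : ∫ ω, (v ⬝ᵥ h ω) ^ 2 ∂μ = v ⬝ᵥ secondMomentMatrix μ h *ᵥ v := by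
  simp only [sq, integral_dotProduct_mul_dotProduct hh]

lemma l2_opNorm_secondMomentMatrix_le [DecidableEq ι] {h : Ω → ι → ℝ}
    (hh : ∀ i, MemLp (fun ω => h ω i) 2 μ) {K : ℝ} (hK : 0 ≤ K)
    (hbound : ∀ w, ∫ ω, (w ⬝ᵥ h ω) ^ 2 ∂μ ≤ K * ∑ i, w i ^ 2) :
    ‖secondMomentMatrix μ h‖ ≤ K := by
  refine Matrix.l2_opNorm_le_of_isHermitian (secondMomentMatrix_isHermitian μ h) hK fun w => ?_
  rw [← integral_dotProduct_sq hh, abs_of_nonneg (integral_nonneg fun _ => sq_nonneg _)]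
  exact hbound w

lemma integral_dotProduct_pow_four_le_of_forall_sum_sq_eq_one {x : Ω → ι → ℝ} {C : ℝ}
    (h4 : ∀ v : ι → ℝ, ∑ i, v i ^ 2 = 1 →
      ∫ ω, (∑ i, v i * x ω i) ^ 4 ∂μ ≤ C * (∫ ω, (∑ i, v i * x ω i) ^ 2 ∂μ) ^ 2)
    (v : ι → ℝ) : ∫ ω, (v ⬝ᵥ x ω) ^ 4 ∂μ ≤ C * (∫ ω, (v ⬝ᵥ x ω) ^ 2 ∂μ) ^ 2 := by
  obtain rfl | hv := eq_or_ne v 0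
  · simp
  set r := ‖WithLp.toLp 2 v‖
  have hr : 0 < r := norm_pos_iff.mpr (by simpa using hv)
  have hu : ∑ i, (r⁻¹ • v) i ^ 2 = 1 := by
    rw [← EuclideanSpace.norm_toLp_sq, WithLp.toLp_smul, norm_smul, norm_inv,
      Real.norm_of_nonneg hr.le, inv_mul_cancel₀ hr.ne', one_pow]
  have hscale : ∀ ω, v ⬝ᵥ x ω = r * ((r⁻¹ • v) ⬝ᵥ x ω) := fun ω => by
    rw [smul_dotProduct, smul_eq_mul, mul_inv_cancel_left₀ hr.ne']
  simp only [hscale, mul_pow, integral_const_mul]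
  calc r ^ 4 * ∫ ω, ((r⁻¹ • v) ⬝ᵥ x ω) ^ 4 ∂μ
      ≤ r ^ 4 * (C * (∫ ω, ((r⁻¹ • v) ⬝ᵥ x ω) ^ 2 ∂μ) ^ 2) := by gcongr; exact h4 _ hu
    _ = _ := by ring

end SecondMoment

section ScalarMoments

variable {Ω : Type*} [MeasurableSpace Ω] {μ : Measure Ω}

lemma integral_sub_mul_of_indepFun {U V ξ : Ω → ℝ} (hU : Integrable U μ) (hV : Integrable V μ)
    (hξ : Integrable ξ μ) (hVξ : IndepFun V ξ μ) (hξmean : ∫ ω, ξ ω ∂μ = 0) :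
    ∫ ω, (U ω - V ω * ξ ω) ∂μ = ∫ ω, U ω ∂μ := by
  have hVξ1 : Integrable (fun ω => V ω * ξ ω) μ := hVξ.integrable_mul hV hξ
  rw [integral_sub hU hVξ1, hVξ.integral_fun_mul_eq_mul_integral hV.1 hξ.1, hξmean, mul_zero,
    sub_zero]

lemma MeasureTheory.MemLp.mul_of_indepFun {X Y : Ω → ℝ} (hX : MemLp X 2 μ) (hY : MemLp Y 2 μ)
    (hXY : IndepFun X Y μ) : MemLp (X * Y) 2 μ := by
  refine (memLp_two_iff_integrable_sq (hX.1.mul hY.1)).mpr ?_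
  simp_rw [Pi.mul_apply, mul_pow]
  exact (hXY.comp (measurable_id.pow_const 2) (measurable_id.pow_const 2)).integrable_mul
    hX.integrable_sq hY.integrable_sq

instance ENNReal.holderTriple_four_four_two : ENNReal.HolderTriple 4 4 2 :=
  ⟨by rw [show (4 : ℝ≥0∞) = 2 * 2 by norm_num, ENNReal.mul_inv (by norm_num) (by norm_num),
      ← mul_add, ENNReal.inv_two_add_inv_two, mul_one]⟩

lemma integral_mul_le_sqrt_mul_sqrt {F G : Ω → ℝ} (hF0 : 0 ≤ᵐ[μ] F) (hG0 : 0 ≤ᵐ[μ] G)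
    (hF : MemLp F 2 μ) (hG : MemLp G 2 μ) :
    ∫ ω, F ω * G ω ∂μ ≤ √(∫ ω, F ω ^ 2 ∂μ) * √(∫ ω, G ω ^ 2 ∂μ) := by
  have := integral_mul_le_Lp_mul_Lq_of_nonneg .two_two hF0 hG0
    (by rwa [ENNReal.ofReal_ofNat]) (by rwa [ENNReal.ofReal_ofNat])
  simpa only [Real.rpow_two, ← Real.sqrt_eq_rpow] using this

lemma integral_sq_mul_sq_le_of_fourthMoment {f g : Ω → ℝ} {C : ℝ} (hC : 0 ≤ C)
    (hf : MemLp f 4 μ) (hg : MemLp g 4 μ)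
    (hf4 : ∫ ω, f ω ^ 4 ∂μ ≤ C * (∫ ω, f ω ^ 2 ∂μ) ^ 2)
    (hg4 : ∫ ω, g ω ^ 4 ∂μ ≤ C * (∫ ω, g ω ^ 2 ∂μ) ^ 2) :
    ∫ ω, f ω ^ 2 * g ω ^ 2 ∂μ ≤ C * (∫ ω, f ω ^ 2 ∂μ) * ∫ ω, g ω ^ 2 ∂μ := by
  have hsqrt : ∀ {h : Ω → ℝ}, ∫ ω, h ω ^ 4 ∂μ ≤ C * (∫ ω, h ω ^ 2 ∂μ) ^ 2 →
      √(∫ ω, (h ω ^ 2) ^ 2 ∂μ) ≤ √C * ∫ ω, h ω ^ 2 ∂μ := fun {h} h4 => by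
    simp_rw [← pow_mul]
    calc √(∫ ω, h ω ^ 4 ∂μ) ≤ √(C * (∫ ω, h ω ^ 2 ∂μ) ^ 2) := Real.sqrt_le_sqrt h4
      _ = √C * ∫ ω, h ω ^ 2 ∂μ := by
        rw [Real.sqrt_mul hC, Real.sqrt_sq (integral_nonneg fun ω => sq_nonneg _)]
  calc ∫ ω, f ω ^ 2 * g ω ^ 2 ∂μ
      ≤ √(∫ ω, (f ω ^ 2) ^ 2 ∂μ) * √(∫ ω, (g ω ^ 2) ^ 2 ∂μ) :=
        integral_mul_le_sqrt_mul_sqrt (.of_forall fun ω => sq_nonneg _)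
          (.of_forall fun ω => sq_nonneg _) (by simpa [sq] using hf.mul' hf)
          (by simpa [sq] using hg.mul' hg)
    _ ≤ (√C * ∫ ω, f ω ^ 2 ∂μ) * (√C * ∫ ω, g ω ^ 2 ∂μ) :=
        mul_le_mul (hsqrt hf4) (hsqrt hg4) (Real.sqrt_nonneg _) (by positivity)
    _ = C * (∫ ω, f ω ^ 2 ∂μ) * ∫ ω, g ω ^ 2 ∂μ := by
        rw [mul_mul_mul_comm, Real.mul_self_sqrt hC, mul_assoc]

lemma integral_sub_mul_sq_of_indepFun [IsFiniteMeasure μ] {U V ξ : Ω → ℝ} (hU : MemLp U 2 μ)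
    (hV : MemLp V 2 μ) (hξ : MemLp ξ 2 μ) (hind : IndepFun (fun ω => (U ω, V ω)) ξ μ)
    (hξmean : ∫ ω, ξ ω ∂μ = 0) :
    ∫ ω, (U ω - V ω * ξ ω) ^ 2 ∂μ =
      ∫ ω, U ω ^ 2 ∂μ + (∫ ω, V ω ^ 2 ∂μ) * ∫ ω, ξ ω ^ 2 ∂μ := by
  have hUVξ : IndepFun (fun ω => U ω * V ω) ξ μ :=
    hind.comp (measurable_fst.mul measurable_snd) measurable_id
  have hV2ξ2 : IndepFun (fun ω => V ω ^ 2) (fun ω => ξ ω ^ 2) μ :=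
    hind.comp (measurable_snd.pow_const 2) (measurable_id.pow_const 2)
  have hξ1 : Integrable ξ μ := hξ.integrable one_le_two
  have hUV : Integrable (fun ω => U ω * V ω) μ := hU.integrable_mul hV
  have hcross : Integrable (fun ω => 2 * (U ω * V ω * ξ ω)) μ :=
    (hUVξ.integrable_mul hUV hξ1).const_mul 2
  have hnoise : Integrable (fun ω => V ω ^ 2 * ξ ω ^ 2) μ :=
    hV2ξ2.integrable_mul hV.integrable_sq hξ.integrable_sq
  calc ∫ ω, (U ω - V ω * ξ ω) ^ 2 ∂μ
      = ∫ ω, (U ω ^ 2 - 2 * (U ω * V ω * ξ ω) + V ω ^ 2 * ξ ω ^ 2) ∂μ := by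
        congr 1 with ω; ring
    _ = ∫ ω, U ω ^ 2 ∂μ + (∫ ω, V ω ^ 2 ∂μ) * ∫ ω, ξ ω ^ 2 ∂μ := by
        have hsub : Integrable (fun ω => U ω ^ 2 - 2 * (U ω * V ω * ξ ω)) μ :=
          hU.integrable_sq.sub hcross
        rw [integral_add hsub hnoise, integral_sub hU.integrable_sq hcross,
          integral_const_mul, hUVξ.integral_fun_mul_eq_mul_integral hUV.1 hξ1.1, hξmean,
          hV2ξ2.integral_fun_mul_eq_mul_integral hV.integrable_sq.1 hξ.integrable_sq.1]
        ring

lemma integral_mul_sub_sub_integral_sq_le [IsProbabilityMeasure μ] {A P ξ : Ω → ℝ} {C σ : ℝ}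
    (hC : 0 ≤ C) (hA : MemLp A 4 μ) (hP : MemLp P 4 μ) (hξ : MemLp ξ 2 μ)
    (hind : IndepFun (fun ω => (A ω, P ω)) ξ μ) (hξmean : ∫ ω, ξ ω ∂μ = 0)
    (hξvar : ∫ ω, ξ ω ^ 2 ∂μ = σ ^ 2)
    (hA4 : ∫ ω, A ω ^ 4 ∂μ ≤ C * (∫ ω, A ω ^ 2 ∂μ) ^ 2)
    (hP4 : ∫ ω, P ω ^ 4 ∂μ ≤ C * (∫ ω, P ω ^ 2 ∂μ) ^ 2) :
    ∫ ω, (A ω * (P ω - ξ ω) - ∫ ω, A ω * P ω ∂μ) ^ 2 ∂μ ≤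
      C * (∫ ω, A ω ^ 2 ∂μ) * (∫ ω, P ω ^ 2 ∂μ) + σ ^ 2 * ∫ ω, A ω ^ 2 ∂μ := by
  have hA2 : MemLp A 2 μ := hA.mono_exponent (by norm_num)
  have hAP : MemLp (fun ω => A ω * P ω) 2 μ := hP.mul' hA
  have hAξ : MemLp (fun ω => A ω * ξ ω) 2 μ :=
    hA2.mul_of_indepFun hξ (hind.comp measurable_fst measurable_id)
  have hind' : IndepFun (fun ω => (A ω * P ω, A ω)) ξ μ :=
    hind.comp (measurable_fst.mul measurable_snd |>.prodMk measurable_fst) measurable_id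
  set F := fun ω => A ω * P ω - A ω * ξ ω
  have hF : MemLp F 2 μ := hAP.sub hAξ
  have hmean : ∫ ω, F ω ∂μ = ∫ ω, A ω * P ω ∂μ :=
    integral_sub_mul_of_indepFun (hAP.integrable one_le_two) (hA2.integrable one_le_two)
      (hξ.integrable one_le_two) (hind.comp measurable_fst measurable_id) hξmean
  calc ∫ ω, (A ω * (P ω - ξ ω) - ∫ ω, A ω * P ω ∂μ) ^ 2 ∂μ = Var[F; μ] := by
        rw [variance_eq_integral hF.1.aemeasurable, hmean]
        simp only [F, mul_sub]
    _ ≤ ∫ ω, F ω ^ 2 ∂μ := variance_le_expectation_sq hF.1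
    _ = ∫ ω, A ω ^ 2 * P ω ^ 2 ∂μ + (∫ ω, A ω ^ 2 ∂μ) * ∫ ω, ξ ω ^ 2 ∂μ := by
        simp only [F, integral_sub_mul_sq_of_indepFun hAP hA2 hξ hind' hξmean, mul_pow]
    _ ≤ _ := by
        rw [hξvar, mul_comm _ (σ ^ 2)]
        gcongr
        exact integral_sq_mul_sq_le_of_fourthMoment hC hA hP hA4 hP4

end ScalarMoments

section Gradient

variable {Ω ι : Type*} [MeasurableSpace Ω] {μ : Measure Ω} [IsProbabilityMeasure μ]
  [Fintype ι] [DecidableEq ι]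

lemma integral_dotProduct_mul_sub_sq_le {x : Ω → ι → ℝ} {ξ : Ω → ℝ} {C σ : ℝ} (hC : 0 ≤ C)
    (hx : ∀ i, MemLp (fun ω => x ω i) 4 μ) (hξ : MemLp ξ 2 μ) (hind : IndepFun x ξ μ)
    (hξmean : ∫ ω, ξ ω ∂μ = 0) (hξvar : ∫ ω, ξ ω ^ 2 ∂μ = σ ^ 2)
    (h4 : ∀ v, ∫ ω, (v ⬝ᵥ x ω) ^ 4 ∂μ ≤ C * (∫ ω, (v ⬝ᵥ x ω) ^ 2 ∂μ) ^ 2) (Δ w : ι → ℝ) :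
    ∫ ω, ((w ⬝ᵥ x ω) * (Δ ⬝ᵥ x ω - ξ ω) - w ⬝ᵥ secondMomentMatrix μ x *ᵥ Δ) ^ 2 ∂μ ≤
      (C * ‖secondMomentMatrix μ x‖ ^ 2 * (∑ i, Δ i ^ 2) + σ ^ 2 * ‖secondMomentMatrix μ x‖) *
        ∑ i, w i ^ 2 := by
  set M := secondMomentMatrix μ x
  have hx2 (i : ι) : MemLp (fun ω => x ω i) 2 μ := (hx i).mono_exponent (by norm_num)
  have hsecond (v : ι → ℝ) : ∫ ω, (v ⬝ᵥ x ω) ^ 2 ∂μ ≤ ‖M‖ * ∑ i, v i ^ 2 := by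
    rw [integral_dotProduct_sq hx2]
    exact M.dotProduct_mulVec_le_l2_opNorm_mul v
  rw [← integral_dotProduct_mul_dotProduct hx2]
  calc _ ≤ C * (∫ ω, (w ⬝ᵥ x ω) ^ 2 ∂μ) * (∫ ω, (Δ ⬝ᵥ x ω) ^ 2 ∂μ) +
          σ ^ 2 * ∫ ω, (w ⬝ᵥ x ω) ^ 2 ∂μ :=
        integral_mul_sub_sub_integral_sq_le hC (memLp_dotProduct hx w) (memLp_dotProduct hx Δ) hξ
          (hind.comp (show Measurable fun v : ι → ℝ => (w ⬝ᵥ v, Δ ⬝ᵥ v) by fun_prop)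
            measurable_id) hξmean hξvar (h4 w) (h4 Δ)
    _ ≤ C * (‖M‖ * ∑ i, w i ^ 2) * (‖M‖ * ∑ i, Δ i ^ 2) + σ ^ 2 * (‖M‖ * ∑ i, w i ^ 2) := by
        gcongr <;> apply hsecond
    _ = _ := by ring

end Gradient

theorem gradient_covariance_opNorm_bound_general
    {Ω : Type*} [MeasureSpace Ω] [IsProbabilityMeasure (ℙ : Measure Ω)]
    (d : ℕ) (x : Ω → Fin d → ℝ) (ξ : Ω → ℝ) (S : Matrix (Fin d) (Fin d) ℝ)
    (C₄ σ : ℝ) (Δ : Fin d → ℝ)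
    (hx4 : ∀ i, MemLp (fun ω => x ω i) 4 ℙ) (hξ2 : MemLp ξ 2 ℙ)
    (hcov : ∀ i j, ∫ ω, x ω i * x ω j ∂ℙ = S i j)
    (hC₄ : 0 ≤ C₄)
    (h4th : ∀ v : Fin d → ℝ, (∑ i, v i ^ 2) = 1 →
      ∫ ω, (∑ i, v i * x ω i) ^ 4 ∂ℙ ≤ C₄ * (∫ ω, (∑ i, v i * x ω i) ^ 2 ∂ℙ) ^ 2)
    (hindep : IndepFun x ξ ℙ)
    (hξmean : ∫ ω, ξ ω ∂ℙ = 0)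
    (hξvar : ∫ ω, ξ ω ^ 2 ∂ℙ = σ ^ 2) :
    ‖Matrix.of (fun i j =>
        ∫ ω, (x ω i * ((∑ l, x ω l * Δ l) - ξ ω) - S.mulVec Δ i) *
             (x ω j * ((∑ l, x ω l * Δ l) - ξ ω) - S.mulVec Δ j) ∂ℙ)‖ ≤
      2 * (C₄ + 1) * ‖S‖ ^ 2 * (∑ i, Δ i ^ 2) + σ ^ 2 * ‖S‖ := by
  have hx2 (i : Fin d) : MemLp (fun ω => x ω i) 2 ℙ := (hx4 i).mono_exponent (by norm_num)
  have hS : secondMomentMatrix ℙ x = S := Matrix.ext hcov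
  set g : Ω → Fin d → ℝ := fun ω i => x ω i * ((∑ l, x ω l * Δ l) - ξ ω) - S.mulVec Δ i
  have hg_eq (ω : Ω) : g ω = (Δ ⬝ᵥ x ω - ξ ω) • x ω - S *ᵥ Δ := by
    ext i
    simp only [g, dotProduct_comm Δ, Pi.sub_apply, Pi.smul_apply, smul_eq_mul, mul_comm]
    rfl
  have hg (i : Fin d) : MemLp (fun ω => g ω i) 2 ℙ := by
    simp only [hg_eq, Pi.sub_apply, Pi.smul_apply, smul_eq_mul, sub_mul]
    exact (((hx4 i).mul' (memLp_dotProduct hx4 Δ)).sub (hξ2.mul_of_indepFun (hx2 i)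
      (hindep.comp (measurable_pi_apply i) measurable_id).symm)).sub (memLp_const _)
  refine l2_opNorm_secondMomentMatrix_le hg (by positivity) fun w => ?_
  have hw := integral_dotProduct_mul_sub_sq_le hC₄ hx4 hξ2 hindep hξmean hξvar
    (integral_dotProduct_pow_four_le_of_forall_sum_sq_eq_one h4th) Δ w
  simp only [hS] at hw
  simp only [hg_eq, dotProduct_sub, dotProduct_smul, smul_eq_mul, mul_comm (_ - ξ _)]
  exact hw.trans (by gcongr; linarith)

/-- Covariance bound for least-squares gradients under bounded 4th moments:
if `x` is mean-zero with covariance `S` and bounded 4th moment (constant `C₄`),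
`ξ` is independent mean-zero with variance `σ²`, and `g = x(x^⊤Δ − ξ)`,
`G = SΔ`, then `‖E[(g − G)(g − G)^⊤]‖_op ≤ 2(C₄+1)‖S‖_op²‖Δ‖₂² + σ²‖S‖_op`. -/
theorem gradient_covariance_opNorm_bound
    {Ω : Type*} [MeasureSpace Ω] [IsProbabilityMeasure (ℙ : Measure Ω)]
    (d : ℕ) (x : Ω → Fin d → ℝ) (ξ : Ω → ℝ) (S : Matrix (Fin d) (Fin d) ℝ)
    (C₄ σ : ℝ) (Δ : Fin d → ℝ)
    (hxmeas : Measurable x) (hξmeas : Measurable ξ)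
    (hx4 : ∀ i, MemLp (fun ω => x ω i) 4 ℙ) (hξ2 : MemLp ξ 2 ℙ)
    (hxmean : ∀ i, ∫ ω, x ω i ∂ℙ = 0)
    (hcov : ∀ i j, ∫ ω, x ω i * x ω j ∂ℙ = S i j)
    (hC₄ : 0 ≤ C₄)
    (h4th : ∀ v : Fin d → ℝ, (∑ i, v i ^ 2) = 1 →
      ∫ ω, (∑ i, v i * x ω i) ^ 4 ∂ℙ ≤ C₄ * (∫ ω, (∑ i, v i * x ω i) ^ 2 ∂ℙ) ^ 2)
    (hindep : IndepFun x ξ ℙ)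
    (hξmean : ∫ ω, ξ ω ∂ℙ = 0)
    (hξvar : ∫ ω, ξ ω ^ 2 ∂ℙ = σ ^ 2) :
    ‖Matrix.of (fun i j =>
        ∫ ω, (x ω i * ((∑ l, x ω l * Δ l) - ξ ω) - S.mulVec Δ i) *
             (x ω j * ((∑ l, x ω l * Δ l) - ξ ω) - S.mulVec Δ j) ∂ℙ)‖ ≤
      2 * (C₄ + 1) * ‖S‖ ^ 2 * (∑ i, Δ i ^ 2) + σ ^ 2 * ‖S‖ :=
  gradient_covariance_opNorm_bound_general d x ξ S C₄ σ Δ hx4 hξ2 hcov hC₄ h4th hindep hξmean hξvar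
end

section
/- Let S = G̃ ∪ B be a disjoint partition of n real numbers, where |B| ≤ εn, all points of G̃ lie in [−M, M], and α satisfies ε ≤ α < 1/2. Let R be the set remaining after removing the ⌊αn⌋ largest and ⌊αn⌋ smallest points of S. Then |(1/|R|)·Σ_{i∈R} a_i − (1/|G̃|)·Σ_{i∈G̃} a_i| ≤ C·(α·M) for a universal constant C (e.g., C = 6/(1−2α)). -/
/-!
Every point surviving the trimming lies in `[-M, M]`: a surviving point above `M` would be an
outlier, and so would the `⌊αn⌋` trimmed points above it, giving more than `⌊αn⌋ ≥ |B|`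
outliers (symmetrically below `-M`). Hence `R` and `G̃` are two sets of points bounded by `M`
whose symmetric difference lies in `B ∪ L ∪ U`, of size at most `3αn`, while
`|R| ≥ (1 - 2α)n`. Two such sets have means at distance at most `2 |R △ G̃| M / |R|`.
-/

open Finset

namespace Finset

variable {ι : Type*} {a : ι → ℝ} {M : ℝ} {s t : Finset ι}

theorem abs_sum_le_card_mul (h : ∀ i ∈ s, |a i| ≤ M) : |∑ i ∈ s, a i| ≤ #s * M := by
  calc |∑ i ∈ s, a i| ≤ ∑ i ∈ s, |a i| := abs_sum_le_sum_abs _ _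
    _ ≤ #s • M := sum_le_card_nsmul _ _ _ h
    _ = #s * M := nsmul_eq_mul _ _

theorem abs_sum_div_card_le (hM : 0 ≤ M) (h : ∀ i ∈ s, |a i| ≤ M) :
    |(∑ i ∈ s, a i) / #s| ≤ M := by
  rcases s.eq_empty_or_nonempty with rfl | hs
  · simpa using hM
  rw [abs_div, Nat.abs_cast, div_le_iff₀ (by exact_mod_cast hs.card_pos), mul_comm]
  exact abs_sum_le_card_mul h

theorem sum_eq_card_mul_sum_div_card (s : Finset ι) (a : ι → ℝ) :
    ∑ i ∈ s, a i = #s * ((∑ i ∈ s, a i) / #s) := by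
  rcases s.eq_empty_or_nonempty with rfl | hs
  · simp
  rw [mul_div_cancel₀ _ (by exact_mod_cast hs.card_pos.ne')]

variable [DecidableEq ι]

theorem abs_sum_sub_sum_le (hs : ∀ i ∈ s, |a i| ≤ M) (ht : ∀ i ∈ t, |a i| ≤ M) :
    |∑ i ∈ s, a i - ∑ i ∈ t, a i| ≤ (#(s \ t) + #(t \ s)) * M := by
  rw [← sum_sdiff_sub_sum_sdiff, add_mul]
  refine (abs_sub _ _).trans (add_le_add ?_ ?_)
  · exact abs_sum_le_card_mul fun i hi ↦ hs i (mem_sdiff.1 hi).1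
  · exact abs_sum_le_card_mul fun i hi ↦ ht i (mem_sdiff.1 hi).1

theorem abs_card_sub_card_le (s t : Finset ι) :
    |(#t : ℝ) - #s| ≤ #(s \ t) + #(t \ s) := by
  have hs : (#(s \ t) : ℝ) + #(s ∩ t) = #s := by exact_mod_cast card_sdiff_add_card_inter s t
  have ht : (#(t \ s) : ℝ) + #(t ∩ s) = #t := by exact_mod_cast card_sdiff_add_card_inter t s
  rw [inter_comm] at ht
  have hst : (0 : ℝ) ≤ #(s \ t) := Nat.cast_nonneg _
  have hts : (0 : ℝ) ≤ #(t \ s) := Nat.cast_nonneg _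
  rw [abs_le]
  constructor <;> linarith

theorem abs_sum_div_card_sub_sum_div_card_le (hs₀ : s.Nonempty)
    (hs : ∀ i ∈ s, |a i| ≤ M) (ht : ∀ i ∈ t, |a i| ≤ M) :
    |(∑ i ∈ s, a i) / #s - (∑ i ∈ t, a i) / #t| ≤ 2 * (#(s \ t) + #(t \ s)) * M / #s := by
  have hM : 0 ≤ M := (abs_nonneg _).trans (hs hs₀.choose hs₀.choose_spec)
  have hm : (0 : ℝ) < #s := by exact_mod_cast hs₀.card_pos
  set μ := (∑ i ∈ t, a i) / #t
  have hsplit : (∑ i ∈ s, a i) / #s - μ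
      = (∑ i ∈ s, a i - ∑ i ∈ t, a i) / #s + μ * (#t - #s) / #s := by
    rw [sum_eq_card_mul_sum_div_card t a]
    field_simp
    ring
  rw [hsplit, ← add_div, abs_div, abs_of_pos hm]
  gcongr
  calc |∑ i ∈ s, a i - ∑ i ∈ t, a i + μ * (#t - #s)|
      ≤ |∑ i ∈ s, a i - ∑ i ∈ t, a i| + |μ| * |(#t : ℝ) - #s| := by
        rw [← abs_mul]; exact abs_add_le _ _
    _ ≤ (#(s \ t) + #(t \ s)) * M + M * (#(s \ t) + #(t \ s)) := by
        gcongr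
        · exact abs_sum_sub_sum_le hs ht
        · exact abs_sum_div_card_le hM ht
        · exact abs_card_sub_card_le s t
    _ = 2 * (#(s \ t) + #(t \ s)) * M := by ring

end Finset

theorem le_of_card_le_of_forall_ge {ι α : Type*} [DecidableEq ι] [LinearOrder α] {f : ι → α}
    {B U : Finset ι} {i : ι} {M : α} (hgood : ∀ j ∉ B, f j ≤ M) (hcard : #B ≤ #U)
    (hiU : i ∉ U) (hU : ∀ j ∈ U, f i ≤ f j) : f i ≤ M := by
  by_contra! hi
  have hsub : insert i U ⊆ B := by
    intro j hj
    by_contra hjB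
    have hjM := hgood j hjB
    rcases mem_insert.1 hj with rfl | hjU
    · exact hjM.not_gt hi
    · exact hjM.not_gt (hi.trans_le (hU j hjU))
  have := card_le_card hsub
  rw [card_insert_of_notMem hiU] at this
  omega

theorem abs_le_of_card_le_of_between {ι : Type*} [DecidableEq ι] {a : ι → ℝ}
    {B L U : Finset ι} {i : ι} {M : ℝ} (hgood : ∀ j ∉ B, |a j| ≤ M)
    (hL : #B ≤ #L) (hU : #B ≤ #U) (hiL : i ∉ L) (hiU : i ∉ U)
    (hLi : ∀ j ∈ L, a j ≤ a i) (hUi : ∀ j ∈ U, a i ≤ a j) : |a i| ≤ M := by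
  refine abs_le.2 ⟨neg_le.1 ?_, ?_⟩
  · exact le_of_card_le_of_forall_ge (f := fun j ↦ -a j)
      (fun j hj ↦ (neg_le_abs _).trans (hgood j hj)) hL hiL fun j hj ↦ neg_le_neg (hLi j hj)
  · exact le_of_card_le_of_forall_ge (fun j hj ↦ (le_abs_self _).trans (hgood j hj)) hU hiU hUi

theorem card_sdiff_add_card_sdiff_le {ι : Type*} [Fintype ι] [DecidableEq ι]
    {G B R L U : Finset ι} (hGB : G ∪ B = univ) (hLUR : L ∪ U ∪ R = univ) :
    #(R \ G) + #(G \ R) ≤ #B + #L + #U := by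
  rw [add_assoc]
  refine add_le_add (card_le_card fun j hj ↦ ?_)
    ((card_le_card fun j hj ↦ ?_).trans (card_union_le L U))
  · exact (mem_union.1 (hGB ▸ mem_univ j)).resolve_left (mem_sdiff.1 hj).2
  · exact (mem_union.1 (hLUR ▸ mem_univ j)).resolve_right (mem_sdiff.1 hj).2

theorem card_le_card_add_card_add_card {ι : Type*} [Fintype ι] [DecidableEq ι]
    {L U R : Finset ι} (hLUR : L ∪ U ∪ R = univ) : Fintype.card ι ≤ #L + #U + #R :=
  calc Fintype.card ι = #(L ∪ U ∪ R) := by rw [hLUR, card_univ]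
    _ ≤ #(L ∪ U) + #R := card_union_le _ _
    _ ≤ #L + #U + #R := by grw [card_union_le L U]

theorem trimmed_mean_robust_general (n : ℕ) (hn : 0 < n) (a : Fin n → ℝ)
    (Gt B : Finset (Fin n)) (ε α M : ℝ)
    (hunion : Gt ∪ B = Finset.univ)
    (hGt : ∀ i ∈ Gt, |a i| ≤ M)
    (hB : (B.card : ℝ) ≤ ε * n)
    (hεα : ε ≤ α) (hα : α < 1 / 2)
    (R L U : Finset (Fin n))
    (hLcard : L.card = ⌊α * n⌋₊) (hUcard : U.card = ⌊α * n⌋₊)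
    (hLR : Disjoint L R) (hUR : Disjoint U R)
    (hcover : L ∪ U ∪ R = Finset.univ)
    (hLlow : ∀ i ∈ L, ∀ j ∈ R, a i ≤ a j)
    (hUhigh : ∀ i ∈ U, ∀ j ∈ R, a j ≤ a i) :
    |(∑ i ∈ R, a i) / R.card - (∑ i ∈ Gt, a i) / Gt.card| ≤
      (6 / (1 - 2 * α)) * (α * M) := by
  have hBα : (#B : ℝ) ≤ α * n := hB.trans (mul_le_mul_of_nonneg_right hεα n.cast_nonneg)
  have hBk : #B ≤ ⌊α * n⌋₊ := Nat.le_floor hBα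
  have hαn : 0 ≤ α * n := (Nat.cast_nonneg _).trans hBα
  have hk : (⌊α * n⌋₊ : ℝ) ≤ α * n := Nat.floor_le hαn
  have hgood : ∀ j ∉ B, |a j| ≤ M := fun j hj ↦
    hGt j <| (mem_union.1 (hunion ▸ mem_univ j)).resolve_right hj
  have hR : ∀ i ∈ R, |a i| ≤ M := fun i hi ↦
    abs_le_of_card_le_of_between hgood (hLcard ▸ hBk) (hUcard ▸ hBk)
      (disjoint_right.1 hLR hi) (disjoint_right.1 hUR hi)
      (fun j hj ↦ hLlow j hj i hi) (fun j hj ↦ hUhigh j hj i hi)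
  have hsymm : (#(R \ Gt) + #(Gt \ R) : ℝ) ≤ 3 * (α * n) := by
    have h := card_sdiff_add_card_sdiff_le hunion hcover
    rw [hLcard, hUcard] at h
    have h' : (#(R \ Gt) + #(Gt \ R) : ℝ) ≤ #B + ⌊α * n⌋₊ + ⌊α * n⌋₊ := by
      exact_mod_cast h
    linarith
  have hRn : (1 - 2 * α) * n ≤ #R := by
    have h := card_le_card_add_card_add_card hcover
    rw [hLcard, hUcard, Fintype.card_fin] at h
    have h' : (n : ℝ) ≤ ⌊α * n⌋₊ + ⌊α * n⌋₊ + #R := by exact_mod_cast h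
    linarith
  have hpos : 0 < (1 - 2 * α) * n := mul_pos (by linarith) (by exact_mod_cast hn)
  have hR₀ : R.Nonempty := card_pos.1 (by exact_mod_cast hpos.trans_le hRn)
  have hM : 0 ≤ M := (abs_nonneg _).trans (hR _ hR₀.choose_spec)
  calc _ ≤ 2 * (#(R \ Gt) + #(Gt \ R)) * M / #R :=
        abs_sum_div_card_sub_sum_div_card_le hR₀ hR hGt
    _ ≤ 2 * (3 * (α * n)) * M / ((1 - 2 * α) * n) := by gcongr
    _ = 6 / (1 - 2 * α) * (α * M) := by
      field_simp
      ring

/-- Robustness of the trimmed mean: let `a : Fin n → ℝ` be split into good points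
`Gt` (all in `[−M, M]`) and bad points `B` with `|B| ≤ εn`, and let `R` be the set
remaining after removing the `⌊αn⌋` largest and `⌊αn⌋` smallest points, where
`ε ≤ α < 1/2`. Then the average over `R` differs from the average over `Gt` by at
most `(6/(1−2α))·α·M`. -/
theorem trimmed_mean_robust (n : ℕ) (hn : 0 < n) (a : Fin n → ℝ)
    (Gt B : Finset (Fin n)) (ε α M : ℝ)
    (hpart : Disjoint Gt B) (hunion : Gt ∪ B = Finset.univ)
    (hM : 0 ≤ M) (hGt : ∀ i ∈ Gt, |a i| ≤ M)
    (hε : 0 ≤ ε) (hB : (B.card : ℝ) ≤ ε * n)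
    (hεα : ε ≤ α) (hα : α < 1 / 2)
    (R L U : Finset (Fin n))
    (hLcard : L.card = ⌊α * n⌋₊) (hUcard : U.card = ⌊α * n⌋₊)
    (hLR : Disjoint L R) (hUR : Disjoint U R) (hLU : Disjoint L U)
    (hcover : L ∪ U ∪ R = Finset.univ)
    (hLlow : ∀ i ∈ L, ∀ j ∈ R, a i ≤ a j)
    (hUhigh : ∀ i ∈ U, ∀ j ∈ R, a j ≤ a i) :
    |(∑ i ∈ R, a i) / R.card - (∑ i ∈ Gt, a i) / Gt.card| ≤
      (6 / (1 - 2 * α)) * (α * M) :=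
  trimmed_mean_robust_general n hn a Gt B ε α M hunion hGt hB hεα hα R L U hLcard hUcard hLR hUR
    hcover hLlow hUhigh
end

section
/- Let f : ℝ^d → ℝ be convex with global minimizer β* (f(β) ≥ f(β*) for all β). Suppose f is μ_α-strongly convex and μ_L-smooth on ℝ^d, and that Ĝ : ℝ^d → ℝ^d satisfies |⟨Ĝ(β) − ∇f(β), β̃ − β*⟩| ≤ (α‖β − β*‖₂ + ψ)‖β̃ − β*‖₂ for all β, β̃. Let β̄ = H_{k'}(β − η·Ĝ(β)) with η = 1/μ_L and k' = 4ρ²k where ρ = μ_L/μ_α, and suppose ‖β*‖₀ ≤ k and α ≤ μ_α/32. Then ‖β̄ − β*‖₂ ≤ (1 − 1/(8ρ))·‖β − β*‖₂ + 4ψ/μ_L. -/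
/-!
Write `z = β - Ĝ β / μL` for the robust gradient step, `w = β - ∇f β / μL` for the exact one
and `β̄ = H_{k'}(z)`. Expanding the square,
`‖β̄ - β*‖² = ⟪β* - β̄, z - β̄⟫ + ⟪β̄ - β*, w - β*⟫ + ⟪β̄ - β*, z - w⟫`.
Since `β*` is `k`-sparse and `β̄` keeps the `4ρ²k` largest coordinates of `z`, the first term is
at most `‖β̄ - β*‖² / (4ρ)`. A gradient step of length `1/μL` contracts the distance to the
minimiser by `1 - 1/(2ρ)`, which bounds the second term, and the robust descent condition bounds
the third. The resulting quadratic inequality in `‖β̄ - β*‖` gives the claim.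
-/

open scoped RealInnerProductSpace
open Finset

theorem Finset.sum_mul_card_le_card_mul_sum {ι R : Type*} [CommSemiring R] [PartialOrder R]
    [IsOrderedRing R] {s t : Finset ι} {g : ι → R} (h : ∀ i ∈ s, ∀ j ∈ t, g i ≤ g j) :
    (∑ i ∈ s, g i) * #t ≤ #s * ∑ j ∈ t, g j :=
  calc (∑ i ∈ s, g i) * #t = ∑ i ∈ s, ∑ _j ∈ t, g i := by simp [sum_mul, mul_comm]
    _ ≤ ∑ _i ∈ s, ∑ j ∈ t, g j := sum_le_sum fun i hi => sum_le_sum fun j hj => h i hi j hj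
    _ = #s * ∑ j ∈ t, g j := by simp

/-- `y = H_{#A}(z)`, with `A` a set of largest-magnitude coordinates of `z`. -/
structure IsHardThreshold {ι : Type*} (z y : EuclideanSpace ℝ ι) (A : Finset ι) : Prop where
  apply_of_mem : ∀ i ∈ A, y i = z i
  apply_of_notMem : ∀ i ∉ A, y i = 0
  abs_le_abs : ∀ i ∈ A, ∀ j ∉ A, |z j| ≤ |z i|

namespace IsHardThreshold

variable {ι : Type*} [Fintype ι] [DecidableEq ι] {z y x : EuclideanSpace ℝ ι} {A S : Finset ι}

theorem inner_sub_eq_sum (h : IsHardThreshold z y A) (hS : ∀ i ∉ S, x i = 0) :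
    ⟪x - y, z - y⟫ = ∑ i ∈ S \ A, x i * z i := by
  rw [PiLp.inner_apply, ← sum_subset (subset_univ (S \ A))]
  · refine sum_congr rfl fun i hi => ?_
    simp [h.apply_of_notMem i (mem_sdiff.1 hi).2, mul_comm]
  · intro i _ hi
    by_cases hiA : i ∈ A
    · simp [h.apply_of_mem i hiA]
    · simp [hS i fun hiS => hi (mem_sdiff.2 ⟨hiS, hiA⟩), h.apply_of_notMem i hiA]

theorem sum_sq_add_sum_sq_le_norm_sq (h : IsHardThreshold z y A) (hS : ∀ i ∉ S, x i = 0) :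
    ∑ i ∈ S \ A, x i ^ 2 + ∑ i ∈ A \ S, z i ^ 2 ≤ ‖y - x‖ ^ 2 := by
  have hx : ∀ i ∈ S \ A, x i ^ 2 = (y i - x i) ^ 2 := fun i hi => by
    simp [h.apply_of_notMem i (mem_sdiff.1 hi).2]
  have hz : ∀ i ∈ A \ S, z i ^ 2 = (y i - x i) ^ 2 := fun i hi => by
    simp [h.apply_of_mem i (mem_sdiff.1 hi).1, hS i (mem_sdiff.1 hi).2]
  rw [sum_congr rfl hx, sum_congr rfl hz, ← sum_union disjoint_sdiff_sdiff,
    EuclideanSpace.real_norm_sq_eq]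
  exact sum_le_sum_of_subset_of_nonneg (subset_univ _) fun i _ _ => by
    simpa using sq_nonneg (y i - x i)

theorem inner_sub_le (h : IsHardThreshold z y A) (hS : ∀ i ∉ S, x i = 0) {k : ℕ}
    (hSk : #S ≤ k) (hkA : k ≤ #A) :
    ⟪x - y, z - y⟫ ≤ √(k / #A) / 2 * ‖y - x‖ ^ 2 := by
  rw [h.inner_sub_eq_sum hS]
  set T := ∑ i ∈ S \ A, x i * z i
  set a := ∑ i ∈ S \ A, x i ^ 2
  set b := ∑ i ∈ A \ S, z i ^ 2
  set c := ∑ i ∈ S \ A, z i ^ 2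
  rcases le_or_gt T 0 with hT | hT
  · exact hT.trans (by positivity)
  have ha : 0 ≤ a := sum_nonneg fun i _ => sq_nonneg _
  have hb : 0 ≤ b := sum_nonneg fun i _ => sq_nonneg _
  have hP : 1 ≤ #(S \ A) := card_pos.2 (nonempty_of_sum_ne_zero hT.ne')
  have hcardS : (#(S \ A) + #(S ∩ A) : ℝ) ≤ k := by
    exact_mod_cast (card_sdiff_add_card_inter S A).trans_le hSk
  have hcardA : (#(A \ S) + #(S ∩ A) : ℝ) = #A := by
    exact_mod_cast inter_comm A S ▸ card_sdiff_add_card_inter A S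
  have hQ : (1 : ℝ) ≤ #(A \ S) := by
    have : (1 : ℝ) ≤ #(S \ A) := by exact_mod_cast hP
    have : (k : ℝ) ≤ #A := by exact_mod_cast hkA
    linarith
  have hCS : T ^ 2 ≤ a * c := sum_mul_sq_le_sq_mul_sq _ _ _
  have hc : c * #(A \ S) ≤ #(S \ A) * b :=
    sum_mul_card_le_card_mul_sum fun i hi j hj => sq_le_sq.2 <|
      h.abs_le_abs j (mem_sdiff.1 hj).1 i (mem_sdiff.1 hi).2
  have hT2 : T ^ 2 * #(A \ S) ≤ a * b * (k - #(S ∩ A)) := by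
    calc T ^ 2 * #(A \ S) ≤ a * (c * #(A \ S)) := by
          rw [← mul_assoc]; exact mul_le_mul_of_nonneg_right hCS (by positivity)
      _ ≤ a * (#(S \ A) * b) := mul_le_mul_of_nonneg_left hc ha
      _ ≤ a * b * (k - #(S ∩ A)) := by
          rw [mul_comm (#(S \ A) : ℝ), ← mul_assoc]
          exact mul_le_mul_of_nonneg_left (by linarith) (mul_nonneg ha hb)
  -- With `m = #(S ∩ A)`: `k (a+b)² (#A-m) - 4 #A a b (k-m) = k (a-b)² (#A-m) + 4 a b m (#A-k)`.
  have hkey : (2 * T) ^ 2 ≤ k / #A * (a + b) ^ 2 := by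
    have hm : (0 : ℝ) ≤ #(S ∩ A) := by positivity
    have hk : (k : ℝ) ≤ #A := by exact_mod_cast hkA
    have hn : (0 : ℝ) < #A := by linarith
    rw [div_mul_eq_mul_div, le_div_iff₀ hn]
    refine le_of_mul_le_mul_right ?_ (by linarith : (0 : ℝ) < #(A \ S))
    have h1 := mul_le_mul_of_nonneg_left hT2 (by positivity : (0 : ℝ) ≤ 4 * #A)
    have h2 : 0 ≤ k * (a - b) ^ 2 * #(A \ S) := by positivity
    have h3 : 0 ≤ 4 * a * b * #(S ∩ A) * (#A - k) := by
      have := sub_nonneg.2 hk; positivity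
    rw [← hcardA] at h1 h3 ⊢
    linarith
  have hab : a + b ≤ ‖y - x‖ ^ 2 := h.sum_sq_add_sum_sq_le_norm_sq hS
  calc T ≤ √(k / #A) / 2 * (a + b) := by
        have := Real.le_sqrt_of_sq_le hkey
        rw [Real.sqrt_mul (by positivity), Real.sqrt_sq (by positivity)] at this
        linarith
    _ ≤ √(k / #A) / 2 * ‖y - x‖ ^ 2 := by gcongr

end IsHardThreshold

section GradientStep

variable {E : Type*} [NormedAddCommGroup E] [InnerProductSpace ℝ E] [CompleteSpace E]
  {f : E → ℝ} {μ L : ℝ} {x₀ : E}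

theorem norm_gradient_sq_le_of_smooth (hL : 0 < L)
    (hsmooth : ∀ x y, f x - f y - ⟪gradient f y, x - y⟫ ≤ L / 2 * ‖x - y‖ ^ 2)
    (hmin : ∀ x, f x₀ ≤ f x) (x : E) :
    ‖gradient f x‖ ^ 2 ≤ 2 * L * (f x - f x₀) := by
  set g := gradient f x
  have h := hsmooth (x - (1 / L) • g) x
  rw [sub_sub_cancel_left, inner_neg_right, real_inner_smul_right, real_inner_self_eq_norm_sq,
    norm_neg, norm_smul, Real.norm_of_nonneg (by positivity)] at h
  have := hmin (x - (1 / L) • g)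
  field_simp at h
  nlinarith

theorem norm_gradient_step_sub_sq_le (hL : 0 < L)
    (hsc : ∀ x y, μ / 2 * ‖x - y‖ ^ 2 ≤ f x - f y - ⟪gradient f y, x - y⟫)
    (hsmooth : ∀ x y, f x - f y - ⟪gradient f y, x - y⟫ ≤ L / 2 * ‖x - y‖ ^ 2)
    (hmin : ∀ x, f x₀ ≤ f x) (x : E) :
    ‖x - (1 / L) • gradient f x - x₀‖ ^ 2 ≤ (1 - μ / L) * ‖x - x₀‖ ^ 2 := by
  have hgrad := norm_gradient_sq_le_of_smooth hL hsmooth hmin x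
  have hconv := hsc x₀ x
  rw [← neg_sub x x₀, inner_neg_right, norm_neg] at hconv
  rw [sub_right_comm, norm_sub_sq_real, real_inner_smul_right, norm_smul,
    Real.norm_of_nonneg (by positivity), real_inner_comm]
  field_simp
  nlinarith

theorem norm_gradient_step_sub_le (hL : 0 < L) (hμL : μ ≤ L)
    (hsc : ∀ x y, μ / 2 * ‖x - y‖ ^ 2 ≤ f x - f y - ⟪gradient f y, x - y⟫)
    (hsmooth : ∀ x y, f x - f y - ⟪gradient f y, x - y⟫ ≤ L / 2 * ‖x - y‖ ^ 2)
    (hmin : ∀ x, f x₀ ≤ f x) (x : E) :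
    ‖x - (1 / L) • gradient f x - x₀‖ ≤ (1 - μ / L / 2) * ‖x - x₀‖ := by
  have hμL' : μ / L ≤ 1 := (div_le_one hL).2 hμL
  refine le_of_sq_le_sq ?_ (mul_nonneg (by linarith) (norm_nonneg _))
  calc ‖x - (1 / L) • gradient f x - x₀‖ ^ 2 ≤ (1 - μ / L) * ‖x - x₀‖ ^ 2 :=
        norm_gradient_step_sub_sq_le hL hsc hsmooth hmin x
    _ ≤ ((1 - μ / L / 2) * ‖x - x₀‖) ^ 2 := by
        nlinarith [sq_nonneg (μ / L / 2 * ‖x - x₀‖)]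

end GradientStep

theorem norm_sub_sq_eq_inner_add_inner_add_inner {E : Type*} [NormedAddCommGroup E]
    [InnerProductSpace ℝ E] (x y z w : E) :
    ‖y - x‖ ^ 2 = ⟪x - y, z - y⟫ + ⟪y - x, w - x⟫ + ⟪y - x, z - w⟫ := by
  rw [← inner_neg_neg, neg_sub, neg_sub, ← inner_add_right, ← inner_add_right,
    ← real_inner_self_eq_norm_sq]
  congr 1
  abel

theorem le_of_sq_le_contraction {κ r u c : ℝ} (hκ0 : 0 ≤ κ) (hκ1 : κ ≤ 1) (hr : 0 ≤ r)
    (hu : 0 ≤ u) (hc : 0 ≤ c)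
    (h : u ^ 2 ≤ κ / 4 * u ^ 2 + (1 - 15 * κ / 32) * r * u + c * u) :
    u ≤ (1 - κ / 8) * r + 4 * c := by
  rcases hu.eq_or_lt with rfl | hu
  · nlinarith
  have hlin : (1 - κ / 4) * u ≤ (1 - 15 * κ / 32) * r + c :=
    le_of_mul_le_mul_right (by nlinarith) hu
  nlinarith [mul_nonneg hκ0 hr, mul_nonneg hκ0 hc]

theorem le_of_cast_eq_four_mul_sq_mul {k k' : ℕ} {ρ : ℝ} (hρ : 1 ≤ ρ)
    (hk' : (k' : ℝ) = 4 * ρ ^ 2 * k) : k ≤ k' := by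
  have : (1 : ℝ) ≤ ρ ^ 2 := one_le_pow₀ hρ
  exact_mod_cast (show (k : ℝ) ≤ k' by rw [hk']; nlinarith [k.cast_nonneg (α := ℝ)])

theorem sqrt_div_le_of_cast_eq_four_mul_sq_mul {k k' : ℕ} {ρ : ℝ} (hρ : 0 < ρ)
    (hk' : (k' : ℝ) = 4 * ρ ^ 2 * k) : √(k / k') / 2 ≤ ρ⁻¹ / 4 := by
  suffices (k : ℝ) / k' ≤ (ρ⁻¹ / 2) ^ 2 by
    linarith [(Real.sqrt_le_left (by positivity)).2 this]
  rcases k.eq_zero_or_pos with rfl | hk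
  · simp only [CharP.cast_eq_zero, zero_div]; positivity
  · rw [hk']; field_simp; norm_num

theorem robust_hard_thresholding_contraction_general (d k k' : ℕ) (μα μL α ψ : ℝ)
    (hμα : 0 < μα) (hμL : μα ≤ μL) (hψ : 0 ≤ ψ)
    (hαsmall : α ≤ μα / 32)
    (hk' : (k' : ℝ) = 4 * (μL / μα) ^ 2 * k)
    (f : EuclideanSpace ℝ (Fin d) → ℝ)
    (hsc : ∀ β₁ β₂ : EuclideanSpace ℝ (Fin d),
      μα / 2 * ‖β₁ - β₂‖ ^ 2 ≤ f β₁ - f β₂ - ⟪gradient f β₂, β₁ - β₂⟫ ∧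
      f β₁ - f β₂ - ⟪gradient f β₂, β₁ - β₂⟫ ≤ μL / 2 * ‖β₁ - β₂‖ ^ 2)
    (βs : EuclideanSpace ℝ (Fin d))
    (hmin : ∀ β, f βs ≤ f β)
    (hβs : (Finset.univ.filter fun i => βs i ≠ 0).card ≤ k)
    (Ghat : EuclideanSpace ℝ (Fin d) → EuclideanSpace ℝ (Fin d))
    (hRDC : ∀ β βt : EuclideanSpace ℝ (Fin d),
      |⟪Ghat β - gradient f β, βt - βs⟫| ≤ (α * ‖β - βs‖ + ψ) * ‖βt - βs‖)
    (β βbar : EuclideanSpace ℝ (Fin d))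
    (A : Finset (Fin d)) (hA : A.card = k')
    (hin : ∀ i ∈ A, βbar i = (β - (1 / μL) • Ghat β) i)
    (hout : ∀ i ∉ A, βbar i = 0)
    (htop : ∀ i ∈ A, ∀ j ∉ A,
      |(β - (1 / μL) • Ghat β) j| ≤ |(β - (1 / μL) • Ghat β) i|) :
    ‖βbar - βs‖ ≤ (1 - 1 / (8 * (μL / μα))) * ‖β - βs‖ + 4 * ψ / μL := by
  have hμL0 : 0 < μL := hμα.trans_le hμL
  have hκ1 : μα / μL ≤ 1 := (div_le_one hμL0).2 hμL
  have hρ : 1 ≤ μL / μα := (one_le_div hμα).2 hμL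
  set z := β - (1 / μL) • Ghat β
  set w := β - (1 / μL) • gradient f β
  have hkA : k ≤ #A := hA ▸ le_of_cast_eq_four_mul_sq_mul hρ hk'
  have hsqrt : √(k / #A) / 2 ≤ μα / μL / 4 := by
    simpa only [hA, inv_div] using sqrt_div_le_of_cast_eq_four_mul_sq_mul (by positivity) hk'
  have hthreshold : ⟪βs - βbar, z - βbar⟫ ≤ μα / μL / 4 * ‖βbar - βs‖ ^ 2 :=
    (IsHardThreshold.inner_sub_le ⟨hin, hout, htop⟩ (by simp) hβs hkA).trans
      (mul_le_mul_of_nonneg_right hsqrt (sq_nonneg _))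
  have hstep : ⟪βbar - βs, w - βs⟫ ≤ ‖βbar - βs‖ * ((1 - μα / μL / 2) * ‖β - βs‖) :=
    (real_inner_le_norm _ _).trans <| mul_le_mul_of_nonneg_left (norm_gradient_step_sub_le hμL0
      hμL (fun x y => (hsc x y).1) (fun x y => (hsc x y).2) hmin β) (norm_nonneg _)
  have hnoise : ⟪βbar - βs, z - w⟫ ≤
      μα / μL / 32 * (‖β - βs‖ * ‖βbar - βs‖) + ψ / μL * ‖βbar - βs‖ := by
    rw [show z - w = (1 / μL) • -(Ghat β - gradient f β) by module, real_inner_smul_right,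
      inner_neg_right, real_inner_comm]
    calc 1 / μL * -⟪Ghat β - gradient f β, βbar - βs⟫
        ≤ 1 / μL * ((α * ‖β - βs‖ + ψ) * ‖βbar - βs‖) := by
          gcongr; exact (neg_le_abs _).trans (hRDC β βbar)
      _ ≤ 1 / μL * ((μα / 32 * ‖β - βs‖ + ψ) * ‖βbar - βs‖) := by gcongr
      _ = _ := by ring
  refine (le_of_sq_le_contraction (by positivity) hκ1 (norm_nonneg _) (norm_nonneg _)
    (by positivity : 0 ≤ ψ / μL) ?_).trans_eq
    (by rw [mul_comm 8, ← div_div, one_div_div]; ring)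
  linarith [norm_sub_sq_eq_inner_add_inner_add_inner βs βbar z w]

/-- Single-iteration contraction of Robust Hard Thresholding: if `f` is convex with
global minimizer `β*` (which is `k`-sparse), `μα`-strongly convex and `μL`-smooth,
the gradient estimator `Ĝ` satisfies the `(α, ψ)`-Robust Descent Condition with
`α ≤ μα/32`, and `β̄ = H_{k'}(β − (1/μL)·Ĝ β)` with `k' = 4ρ²k`, `ρ = μL/μα`, then
`‖β̄ − β*‖ ≤ (1 − 1/(8ρ))·‖β − β*‖ + 4ψ/μL`. -/
theorem robust_hard_thresholding_contraction (d k k' : ℕ) (μα μL α ψ : ℝ)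
    (hμα : 0 < μα) (hμL : μα ≤ μL) (hα : 0 ≤ α) (hψ : 0 ≤ ψ)
    (hαsmall : α ≤ μα / 32)
    (hk' : (k' : ℝ) = 4 * (μL / μα) ^ 2 * k)
    (f : EuclideanSpace ℝ (Fin d) → ℝ) (hf : Differentiable ℝ f)
    (hconv : ConvexOn ℝ Set.univ f)
    (hsc : ∀ β₁ β₂ : EuclideanSpace ℝ (Fin d),
      μα / 2 * ‖β₁ - β₂‖ ^ 2 ≤ f β₁ - f β₂ - ⟪gradient f β₂, β₁ - β₂⟫ ∧
      f β₁ - f β₂ - ⟪gradient f β₂, β₁ - β₂⟫ ≤ μL / 2 * ‖β₁ - β₂‖ ^ 2)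
    (βs : EuclideanSpace ℝ (Fin d))
    (hmin : ∀ β, f βs ≤ f β)
    (hβs : (Finset.univ.filter fun i => βs i ≠ 0).card ≤ k)
    (Ghat : EuclideanSpace ℝ (Fin d) → EuclideanSpace ℝ (Fin d))
    (hRDC : ∀ β βt : EuclideanSpace ℝ (Fin d),
      |⟪Ghat β - gradient f β, βt - βs⟫| ≤ (α * ‖β - βs‖ + ψ) * ‖βt - βs‖)
    (β βbar : EuclideanSpace ℝ (Fin d))
    (A : Finset (Fin d)) (hA : A.card = k')
    (hin : ∀ i ∈ A, βbar i = (β - (1 / μL) • Ghat β) i)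
    (hout : ∀ i ∉ A, βbar i = 0)
    (htop : ∀ i ∈ A, ∀ j ∉ A,
      |(β - (1 / μL) • Ghat β) j| ≤ |(β - (1 / μL) • Ghat β) i|) :
    ‖βbar - βs‖ ≤ (1 - 1 / (8 * (μL / μα))) * ‖β - βs‖ + 4 * ψ / μL :=
  robust_hard_thresholding_contraction_general d k k' μα μL α ψ hμα hμL hψ hαsmall hk' f hsc βs hmin
    hβs Ghat hRDC β βbar A hA hin hout htop
end
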